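/- Let the discrete solution satisfy p_h^{n+1} cell values given as convex combinations of the p_h^n cell values (under the CFL condition), and let φ : ℝ → ℝ be a nonnegative convex function with ∬ φ(p_h(0,x,v)) dx dv < ∞. Then for all n, ∬ φ(p_h(t^{n+1},x,v)) dx dv ≤ ∬ φ(p_h(t^n,x,v)) dx dv. -/
import Mathlib


/-- If the update of the finite volume scheme writes the new cell values as convex combinations
of the old ones (under the CFL condition), in a mass-compatible way with respect to the cell
measures `c`, then every nonnegative convex functional of the discrete solution is
non-increasing in time:
`∑ᵢ cᵢ φ(pⁿ⁺¹ᵢ) ≤ ∑ᵢ cᵢ φ(pⁿᵢ)`, the discrete form of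
`∬ φ(p_h(tⁿ⁺¹)) dx dv ≤ ∬ φ(p_h(tⁿ)) dx dv`. -/
theorem stmt_7 {ι : Type*} [Fintype ι] (p : ℕ → ι → ℝ) (c : ι → ℝ) (w : ι → ι → ℝ)
    (hc : ∀ i, 0 < c i)
    (hw0 : ∀ i j, 0 ≤ w i j) (hrow : ∀ i, ∑ j, w i j = 1)
    (hcol : ∀ j, ∑ i, c i * w i j ≤ c j)
    (hscheme : ∀ n i, p (n + 1) i = ∑ j, w i j * p n j)
    (φ : ℝ → ℝ) (hφconv : ConvexOn ℝ Set.univ φ) (hφ0 : ∀ r, 0 ≤ φ r) :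
    ∀ n, ∑ i, c i * φ (p (n + 1) i) ≤ ∑ i, c i * φ (p n i) := by
  intro n
  have jensen : ∀ i, φ (p (n + 1) i) ≤ ∑ j, w i j * φ (p n j) := by
    intro i
    rw [hscheme]
    exact hφconv.map_sum_le (fun j _ => hw0 i j) (hrow i) (fun j _ => Set.mem_univ _)
  calc ∑ i, c i * φ (p (n + 1) i)
      ≤ ∑ i, c i * ∑ j, w i j * φ (p n j) := by
        refine Finset.sum_le_sum fun i _ => ?_
        exact mul_le_mul_of_nonneg_left (jensen i) (hc i).le
    _ = ∑ j, (∑ i, c i * w i j) * φ (p n j) := by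
        simp only [Finset.mul_sum, Finset.sum_mul, mul_assoc]
        exact Finset.sum_comm
    _ ≤ ∑ i, c i * φ (p n i) := by
        refine Finset.sum_le_sum fun j _ => ?_
        exact mul_le_mul_of_nonneg_right (hcol j) (hφ0 _)
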